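/- arXiv:1905.01130 — 2 statements merged into one kernel-verified Lean document; each statement's English description precedes it below -/
import Mathlib

section
/- Let [X,d,m] be an m-connected metric random walk space with an invariant and reversible σ-finite measure ν, and let Ω ⊂ X be ν-measurable with 0 < ν(Ω) < ν(X) and ν(Ω) < ∞. If Ω is m-calibrable, then (1/ν(Ω)) ∫_Ω m_x(Ω) dν(x) ≤ 2 · ν-ess inf_{x∈Ω} m_x(Ω); equivalently, ν-ess sup_{x∈Ω} H^m_{∂Ω}(x) ≤ λ_Ω^m, where the m-mean curvature is H^m_{∂Ω}(x) := 1 − 2 m_x(Ω). -/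
open MeasureTheory ENNReal Filter Set Topology

noncomputable section

variable {X : Type*} [MeasurableSpace X]

/-- The double integral `∫∫ |u(y) − u(x)| dm_x(y) dν(x)`. -/
def nlEnergy (m : X → Measure X) (ν : Measure X) (u : X → ℝ) : ℝ≥0∞ :=
  ∫⁻ x, ∫⁻ y, ENNReal.ofReal |u y - u x| ∂(m x) ∂ν

/-- The `m`-total variation `TV_m(u) = (1/2) ∫∫ |u(y) − u(x)| dm_x(y) dν(x)`. -/
def TVm (m : X → Measure X) (ν : Measure X) (u : X → ℝ) : ℝ≥0∞ :=
  2⁻¹ * nlEnergy m ν u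

/-- `u ∈ BV_m(X,ν)`: a measurable function with finite nonlocal energy. -/
def MemBVm (m : X → Measure X) (ν : Measure X) (u : X → ℝ) : Prop :=
  Measurable u ∧ nlEnergy m ν u < ⊤

/-- `u ∈ BV_m^0(X,ν)`: `u ∈ BV_m(X,ν)` vanishing a.e. outside a set `A` with `0 < ν A < ν X`. -/
def MemBVm0 (m : X → Measure X) (ν : Measure X) (u : X → ℝ) : Prop :=
  MemBVm m ν u ∧ ∃ A : Set X, MeasurableSet A ∧ 0 < ν A ∧ ν A < ν Set.univ ∧
    ∀ᵐ x ∂ν, x ∉ A → u x = 0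

/-- The `m`-interaction `L_m(A,B) = ∫_A m_x(B) dν(x)`. -/
def Lm (m : X → Measure X) (ν : Measure X) (A B : Set X) : ℝ≥0∞ :=
  ∫⁻ x in A, m x B ∂ν

/-- The `m`-perimeter `P_m(E) = L_m(E, X∖E)`. -/
def Pm (m : X → Measure X) (ν : Measure X) (E : Set X) : ℝ≥0∞ :=
  Lm m ν E Eᶜ

/-- `ν` is invariant and reversible for `m`. -/
def Reversible (m : X → Measure X) (ν : Measure X) : Prop :=
  ∀ F : X → X → ℝ≥0∞, Measurable (Function.uncurry F) →
    ∫⁻ x, ∫⁻ y, F x y ∂(m x) ∂ν = ∫⁻ y, ∫⁻ x, F x y ∂(m y) ∂ν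

/-- `x ↦ m_x(A)` is measurable for every Borel set `A`. -/
def MeasurableKernel (m : X → Measure X) : Prop :=
  ∀ A : Set X, MeasurableSet A → Measurable fun x => m x A

/-- The measure `ν ⊗ m_x` on `X × X`, given by `(ν ⊗ m_x)(U) = ∫ m_x(U_x) dν(x)`. -/
def nuOtimes (m : X → Measure X) (ν : Measure X) : Measure (X × X) :=
  ν.bind fun x => (m x).map (Prod.mk x)

/-- The `m`-divergence `div_m z (x) = (1/2) ∫ (z(x,y) − z(y,x)) dm_x(y)`. -/
def divm (m : X → Measure X) (z : X → X → ℝ) (x : X) : ℝ :=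
  2⁻¹ * ∫ y, (z x y - z y x) ∂(m x)

/-- The multivalued sign function. -/
def signSet (r : ℝ) : Set ℝ :=
  if 0 < r then {1} else if r < 0 then {-1} else Set.Icc (-1) 1

/-- `[X,d,m]` is `m`-connected with respect to `ν`. -/
def MConnected (m : X → Measure X) (ν : Measure X) : Prop :=
  ∀ A B : Set X, MeasurableSet A → MeasurableSet B → 0 < ν A → 0 < ν B →
    A ∪ B = Set.univ → 0 < Lm m ν A B

/-- `ν` is ergodic for `m`. -/
def ErgodicRW (m : X → Measure X) (ν : Measure X) : Prop :=
  ∀ B : Set X, MeasurableSet B → (∀ x ∈ B, m x B = 1) → ν B = 0 ∨ ν B = 1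

/-- `v ∈ ∂F_m(u)`, where `F_m(w) = TV_m(w)` for `w ∈ L² ∩ BV_m` and `+∞` otherwise.
This unfolds the subdifferential inequality: it forces `F_m(u) < ∞` and the inequality
is trivial for test functions `w` with `F_m(w) = ∞`. -/
def subdiffFm (m : X → Measure X) (ν : Measure X) (u v : X → ℝ) : Prop :=
  MemLp u 2 ν ∧ MemLp v 2 ν ∧ MemBVm m ν u ∧
    ∀ w : X → ℝ, MemLp w 2 ν → MemBVm m ν w →
      (TVm m ν u).toReal + ∫ x, v x * (w x - u x) ∂ν ≤ (TVm m ν w).toReal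

/-- `(λ, u)` is an `m`-eigenpair of the 1-Laplacian. -/
def IsEigenpair (m : X → Measure X) (ν : Measure X) (lam : ℝ) (u : X → ℝ) : Prop :=
  eLpNorm u 1 ν = 1 ∧
    ∃ ξ : X → ℝ, MemLp ξ ⊤ ν ∧ (∀ᵐ x ∂ν, ξ x ∈ signSet (u x)) ∧
      subdiffFm m ν u fun x => lam * ξ x

/-- The `m`-Cheeger constant of a set `Ω`. -/
def h1m (m : X → Measure X) (ν : Measure X) (Ω : Set X) : ℝ≥0∞ :=
  sInf {r : ℝ≥0∞ | ∃ E : Set X, MeasurableSet E ∧ E ⊆ Ω ∧ 0 < ν E ∧ r = Pm m ν E / ν E}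

/-- `Ω` is `m`-calibrable. -/
def Calibrable (m : X → Measure X) (ν : Measure X) (Ω : Set X) : Prop :=
  h1m m ν Ω = Pm m ν Ω / ν Ω

/-- The `m`-Cheeger constant of the whole space (for a probability measure `ν`). -/
def cheegerConst (m : X → Measure X) (ν : Measure X) : ℝ≥0∞ :=
  sInf {r : ℝ≥0∞ | ∃ D : Set X, MeasurableSet D ∧ 0 < ν D ∧ ν D < 1 ∧
    r = Pm m ν D / min (ν D) (ν Dᶜ)}

/-- The Dirichlet energy functional `H_m(u) = (1/2) ∫∫ (u(x) − u(y))² dm_x(y) dν(x)`. -/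
def Hm (m : X → Measure X) (ν : Measure X) (u : X → ℝ) : ℝ≥0∞ :=
  2⁻¹ * ∫⁻ x, ∫⁻ y, ENNReal.ofReal ((u x - u y) ^ 2) ∂(m x) ∂ν

end

/-! Removing from a calibrable `Ω` a part `D` changes the perimeter by at most
`∫_D (2 m_x(Ω) - 1) dν` (reversibility turns `L_m(Ω∖D, D)` into `L_m(D, Ω∖D) ≤ L_m(D, Ω)`).
Calibrability says this cannot decrease the ratio `P_m/ν`, which forces
`ν(D) · L_m(Ω, Ω) ≤ 2 L_m(D, Ω) · ν(Ω)`. Taking for `D` the sublevel sets `{x ∈ Ω : m_x(Ω) ≤ t}`,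
`t` above the essential infimum, gives the bound; the curvature form follows from
`P_m(Ω) + L_m(Ω, Ω) = ν(Ω)`. -/

noncomputable section

variable {X : Type*} [MeasurableSpace X] {m : X → Measure X} {ν : Measure X}

/-- The `m`-mean curvature `H^m_{∂Ω}` of the paper. -/
def meanCurvature (m : X → Measure X) (Ω : Set X) (x : X) : ℝ :=
  1 - 2 * (m x Ω).toReal

theorem Reversible.Lm_comm (hrev : Reversible m ν) {A B : Set X} (hA : MeasurableSet A)
    (hB : MeasurableSet B) : Lm m ν A B = Lm m ν B A := by
  have hF : Measurable (Function.uncurry fun x y => A.indicator 1 x * B.indicator 1 y :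
      X × X → ℝ≥0∞) :=
    ((measurable_one.indicator hA).comp measurable_fst).mul
      ((measurable_one.indicator hB).comp measurable_snd)
  have h := hrev _ hF
  simp only [lintegral_const_mul _ (measurable_one.indicator hB),
    lintegral_mul_const _ (measurable_one.indicator hA), lintegral_indicator_one hA,
    lintegral_indicator_one hB] at h
  classical
  rw [Lm, Lm, ← lintegral_indicator hA, ← lintegral_indicator hB]
  convert h using 2 <;> ext x <;> simp only [Set.indicator_apply] <;> split_ifs <;> simp

theorem Lm_add_Lm_compl [∀ x, IsProbabilityMeasure (m x)] (hker : MeasurableKernel m)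
    (A : Set X) {B : Set X} (hB : MeasurableSet B) : Lm m ν A B + Lm m ν A Bᶜ = ν A := by
  rw [Lm, Lm, ← lintegral_add_left (hker B hB)]
  simp [measure_add_measure_compl hB]

theorem Lm_le_mul {A : Set X} (hA : MeasurableSet A) {B : Set X} {t : ℝ≥0∞}
    (ht : ∀ x ∈ A, m x B ≤ t) : Lm m ν A B ≤ t * ν A :=
  (setLIntegral_mono' hA ht).trans_eq (setLIntegral_const A t)

theorem Pm_diff_add_le [∀ x, IsProbabilityMeasure (m x)] (hrev : Reversible m ν)
    (hker : MeasurableKernel m) {Ω D : Set X} (hΩ : MeasurableSet Ω) (hD : MeasurableSet D)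
    (hDΩ : D ⊆ Ω) : Pm m ν (Ω \ D) + ν D ≤ Pm m ν Ω + 2 * Lm m ν D Ω := by
  have hPE : Pm m ν (Ω \ D) = Lm m ν (Ω \ D) Ωᶜ + Lm m ν (Ω \ D) D := by
    rw [Pm, Lm, Lm, Lm, ← lintegral_add_left (hker _ hΩ.compl), Set.compl_sdiff]
    refine lintegral_congr fun x => ?_
    rw [measure_union (disjoint_compl_right.mono_left hDΩ) hΩ.compl, add_comm]
  have hPΩ : Pm m ν Ω = Lm m ν (Ω \ D) Ωᶜ + Lm m ν D Ωᶜ := by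
    rw [Pm, Lm, ← Set.sdiff_union_of_subset hDΩ, lintegral_union hD Set.disjoint_sdiff_left,
      Set.sdiff_union_of_subset hDΩ]
    rfl
  have hED : Lm m ν (Ω \ D) D ≤ Lm m ν D Ω :=
    (hrev.Lm_comm (hΩ.diff hD) hD).trans_le
      (lintegral_mono fun x => measure_mono Set.sdiff_subset)
  calc Pm m ν (Ω \ D) + ν D
      = Pm m ν Ω + Lm m ν (Ω \ D) D + Lm m ν D Ω := by
        rw [hPE, hPΩ, ← Lm_add_Lm_compl hker D hΩ]; ring
    _ ≤ Pm m ν Ω + Lm m ν D Ω + Lm m ν D Ω := by gcongr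
    _ = Pm m ν Ω + 2 * Lm m ν D Ω := by ring

theorem Calibrable.Pm_mul_le {Ω : Set X} (hcal : Calibrable m ν Ω) (h0 : ν Ω ≠ 0)
    (h2 : ν Ω ≠ ⊤) {E : Set X} (hE : MeasurableSet E) (hEΩ : E ⊆ Ω) :
    Pm m ν Ω * ν E ≤ Pm m ν E * ν Ω := by
  rcases eq_or_ne (ν E) 0 with hE0 | hE0
  · simp [hE0]
  have hEtop : ν E ≠ ⊤ := ne_top_of_le_ne_top h2 (measure_mono hEΩ)
  have hratio : Pm m ν Ω / ν Ω ≤ Pm m ν E / ν E :=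
    hcal ▸ sInf_le ⟨E, hE, hEΩ, pos_iff_ne_zero.2 hE0, rfl⟩
  rw [ENNReal.div_le_iff h0 h2] at hratio
  calc Pm m ν Ω * ν E ≤ Pm m ν E / ν E * ν Ω * ν E := by gcongr
    _ = Pm m ν E * ν Ω := by rw [mul_right_comm, ENNReal.div_mul_cancel hE0 hEtop]

theorem Calibrable.measure_mul_Lm_le [∀ x, IsProbabilityMeasure (m x)] (hrev : Reversible m ν)
    (hker : MeasurableKernel m) {Ω : Set X} (hcal : Calibrable m ν Ω) (hΩ : MeasurableSet Ω)
    (h0 : ν Ω ≠ 0) (h2 : ν Ω ≠ ⊤) {D : Set X} (hD : MeasurableSet D) (hDΩ : D ⊆ Ω) :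
    ν D * Lm m ν Ω Ω ≤ 2 * Lm m ν D Ω * ν Ω := by
  set E := Ω \ D
  have hw : ν E + ν D = ν Ω := by
    simpa only [Set.inter_eq_self_of_subset_right hDΩ] using measure_sdiff_add_inter Ω hD
  have hp : ν Ω = Pm m ν Ω + Lm m ν Ω Ω := by
    rw [add_comm, Pm, Lm_add_Lm_compl hker Ω hΩ]
  have hptop : Pm m ν Ω ≠ ⊤ := ne_top_of_le_ne_top h2 (hp ▸ le_self_add)
  have hdtop : ν D ≠ ⊤ := ne_top_of_le_ne_top h2 (measure_mono hDΩ)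
  have hetop : ν E ≠ ⊤ := ne_top_of_le_ne_top h2 (measure_mono Set.sdiff_subset)
  -- `P_m(Ω) ν(E)` cancels from the calibrability inequality `P_m(Ω) ν(E) ≤ P_m(E) ν(Ω)`.
  have hdw : ν D * ν Ω ≤ Pm m ν Ω * ν D + 2 * Lm m ν D Ω * ν Ω := by
    refine (ENNReal.add_le_add_iff_left (mul_ne_top hptop hetop)).1 ?_
    calc Pm m ν Ω * ν E + ν D * ν Ω ≤ Pm m ν E * ν Ω + ν D * ν Ω := by
          gcongr ?_ + _; exact hcal.Pm_mul_le h0 h2 (hΩ.diff hD) Set.sdiff_subset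
      _ = (Pm m ν E + ν D) * ν Ω := by ring
      _ ≤ (Pm m ν Ω + 2 * Lm m ν D Ω) * ν Ω := by
          gcongr ?_ * _; exact Pm_diff_add_le hrev hker hΩ hD hDΩ
      _ = Pm m ν Ω * ν E + (Pm m ν Ω * ν D + 2 * Lm m ν D Ω * ν Ω) := by
          rw [← hw]; ring
  refine (ENNReal.add_le_add_iff_left (mul_ne_top hdtop hptop)).1 ?_
  calc ν D * Pm m ν Ω + ν D * Lm m ν Ω Ω = ν D * ν Ω := by rw [hp]; ring
    _ ≤ Pm m ν Ω * ν D + 2 * Lm m ν D Ω * ν Ω := hdw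
    _ = ν D * Pm m ν Ω + 2 * Lm m ν D Ω * ν Ω := by ring

theorem measure_le_ne_zero_of_essInf_lt {β : Type*} [CompleteLinearOrder β] {f : X → β}
    {t : β} (ht : essInf f ν < t) : ν {x | f x ≤ t} ≠ 0 := by
  intro h
  have hlt : ∀ᵐ x ∂ν, t < f x := measure_eq_zero_iff_ae_notMem.1 h |>.mono fun x hx =>
    lt_of_not_ge hx
  exact (le_essInf_of_ae_le t (hlt.mono fun x hx => hx.le)).not_gt ht

theorem Calibrable.Lm_div_le_of_essInf_lt [∀ x, IsProbabilityMeasure (m x)]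
    (hrev : Reversible m ν) (hker : MeasurableKernel m) {Ω : Set X} (hcal : Calibrable m ν Ω)
    (hΩ : MeasurableSet Ω) (h0 : ν Ω ≠ 0) (h2 : ν Ω ≠ ⊤) {t : ℝ≥0∞}
    (ht : essInf (fun x => m x Ω) (ν.restrict Ω) < t) : Lm m ν Ω Ω / ν Ω ≤ 2 * t := by
  set D := {x | m x Ω ≤ t} ∩ Ω
  have hD : MeasurableSet D := (hker Ω hΩ measurableSet_Iic).inter hΩ
  have hd0 : ν D ≠ 0 := by
    simpa only [Measure.restrict_apply' hΩ] using measure_le_ne_zero_of_essInf_lt ht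
  have hdtop : ν D ≠ ⊤ := ne_top_of_le_ne_top h2 (measure_mono Set.inter_subset_right)
  refine ENNReal.div_le_of_le_mul <| (ENNReal.mul_le_mul_iff_right hd0 hdtop).1 ?_
  calc ν D * Lm m ν Ω Ω ≤ 2 * Lm m ν D Ω * ν Ω :=
        hcal.measure_mul_Lm_le hrev hker hΩ h0 h2 hD Set.inter_subset_right
    _ ≤ 2 * (t * ν D) * ν Ω := by gcongr; exact Lm_le_mul hD fun x hx => hx.1
    _ = ν D * (2 * t * ν Ω) := by ring

theorem essSup_meanCurvature_le [∀ x, IsProbabilityMeasure (m x)] (hker : MeasurableKernel m)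
    {Ω : Set X} (hΩ : MeasurableSet Ω) (h0 : ν Ω ≠ 0) (h2 : ν Ω ≠ ⊤)
    (h : Lm m ν Ω Ω / ν Ω ≤ 2 * essInf (fun x => m x Ω) (ν.restrict Ω)) :
    essSup (meanCurvature m Ω) (ν.restrict Ω) ≤ (Pm m ν Ω).toReal / (ν Ω).toReal := by
  have hPI : (Pm m ν Ω).toReal + (Lm m ν Ω Ω).toReal = (ν Ω).toReal := by
    have hsum := Lm_add_Lm_compl (ν := ν) hker Ω hΩ
    rw [← toReal_add, add_comm, Pm, hsum]
    · exact ne_top_of_le_ne_top h2 (hsum ▸ le_add_self)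
    · exact ne_top_of_le_ne_top h2 (hsum ▸ le_self_add)
  have hP : (Pm m ν Ω).toReal / (ν Ω).toReal = 1 - (Lm m ν Ω Ω).toReal / (ν Ω).toReal := by
    rw [eq_sub_of_add_eq hPI, sub_div, div_self (toReal_pos h0 h2).ne']
  have : (ae (ν.restrict Ω)).NeBot := ae_neBot.2 (by rwa [Ne, Measure.restrict_eq_zero])
  have hbdd : IsCoboundedUnder (· ≤ ·) (ae (ν.restrict Ω)) (meanCurvature m Ω) :=
    isCoboundedUnder_le_of_le _ (x := -1) fun x => by
      have : (m x Ω).toReal ≤ 1 := toReal_le_of_le_ofReal zero_le_one (by simpa using prob_le_one)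
      simp only [meanCurvature]; linarith
  refine essSup_le_of_ae_le (f := meanCurvature m Ω) _ ?_ hbdd
  filter_upwards [ae_essInf_le (f := fun x => m x Ω)] with x hx
  have hIx : (Lm m ν Ω Ω).toReal / (ν Ω).toReal ≤ 2 * (m x Ω).toReal := by
    have hle : Lm m ν Ω Ω / ν Ω ≤ 2 * m x Ω := h.trans (by gcongr)
    simpa only [toReal_div, toReal_mul, toReal_ofNat] using toReal_mono (by finiteness) hle
  rw [meanCurvature, hP]
  linarith

end

theorem calibrable_curvature_bound_general
    {X : Type*} [MeasurableSpace X]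
    (m : X → Measure X) (hprob : ∀ x, IsProbabilityMeasure (m x))
    (hker : MeasurableKernel m)
    (ν : Measure X) (hrev : Reversible m ν)
    (Ω : Set X) (hΩ : MeasurableSet Ω)
    (h0 : 0 < ν Ω) (h2 : ν Ω < ⊤)
    (hcal : Calibrable m ν Ω) :
    (∫⁻ x in Ω, m x Ω ∂ν) / ν Ω ≤ 2 * essInf (fun x => m x Ω) (ν.restrict Ω) ∧
    essSup (fun x => 1 - 2 * (m x Ω).toReal) (ν.restrict Ω) ≤
      (Pm m ν Ω).toReal / (ν Ω).toReal := by
  have hmean : Lm m ν Ω Ω / ν Ω ≤ 2 * essInf (fun x => m x Ω) (ν.restrict Ω) := by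
    refine le_of_forall_gt_imp_ge_of_dense fun c hc => ?_
    have ht : essInf (fun x => m x Ω) (ν.restrict Ω) < c / 2 := by
      rwa [ENNReal.lt_div_iff_mul_lt (by simp) (by simp), mul_comm]
    simpa [ENNReal.mul_div_cancel'] using
      hcal.Lm_div_le_of_essInf_lt hrev hker hΩ h0.ne' h2.ne ht
  exact ⟨hmean, essSup_meanCurvature_le hker hΩ h0.ne' h2.ne hmean⟩

/-- If `Ω` is `m`-calibrable, then `(1/ν(Ω)) ∫_Ω m_x(Ω) dν(x) ≤ 2 · ν-essinf_{x∈Ω} m_x(Ω)`,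
or, equivalently, `ν-esssup_{x∈Ω} H^m_{∂Ω}(x) ≤ λ_Ω^m` for the `m`-mean curvature
`H^m_{∂Ω}(x) = 1 − 2 m_x(Ω)`. -/
theorem calibrable_curvature_bound
    {X : Type*} [MetricSpace X] [PolishSpace X] [MeasurableSpace X] [BorelSpace X]
    (m : X → Measure X) (hprob : ∀ x, IsProbabilityMeasure (m x))
    (hker : MeasurableKernel m)
    (ν : Measure X) [SigmaFinite ν] (hrev : Reversible m ν)
    (hconn : MConnected m ν)
    (Ω : Set X) (hΩ : MeasurableSet Ω)
    (h0 : 0 < ν Ω) (h1 : ν Ω < ν Set.univ) (h2 : ν Ω < ⊤)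
    (hcal : Calibrable m ν Ω) :
    (∫⁻ x in Ω, m x Ω ∂ν) / ν Ω ≤ 2 * essInf (fun x => m x Ω) (ν.restrict Ω) ∧
    essSup (fun x => 1 - 2 * (m x Ω).toReal) (ν.restrict Ω) ≤
      (Pm m ν Ω).toReal / (ν Ω).toReal :=
  calibrable_curvature_bound_general m hprob hker ν hrev Ω hΩ h0 h2 hcal
end

section
/- Let [X,d,m] be an m-connected metric random walk space with an invariant and reversible probability measure ν (so that ν is ergodic). If (λ,u) is an m-eigenpair of the 1-Laplacian Δ₁^m, then λ ≠ 0 if and only if 0 ∈ med_ν(u), where med_ν(u) := {μ ∈ ℝ : ν({x : u(x) < μ}) ≤ 1/2 and ν({x : u(x) > μ}) ≤ 1/2}. -/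
open MeasureTheory ENNReal Filter Set Topology

/-!
If `λ ≠ 0`, testing the subdifferential inequality with `u ± 1` (which has the same total
variation as `u`) gives `∫ ξ = 0`; since `ξ = 1` on `{u > 0}`, `ξ = -1` on `{u < 0}` and
`|ξ| ≤ 1`, each of these sets has measure at most `1/2`.

If `λ = 0`, testing with `0` gives `TV_m(u) = 0`, so `m_x`-almost every `y` has `u y = u x`
for `ν`-almost every `x`. By `m`-connectedness, `{u > 0}` and `{u < 0}` are then null or
conull; being of measure at most `1/2` they are null, so `u = 0` a.e., contradicting
`‖u‖₁ = 1`.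
-/

section

variable {X : Type*} [MeasurableSpace X] {m : X → Measure X} {ν : Measure X} {u : X → ℝ}

lemma signSet_subset_Icc (r : ℝ) : signSet r ⊆ Icc (-1) 1 := by
  unfold signSet
  split_ifs <;> simp

lemma signSet_of_pos {r : ℝ} (hr : 0 < r) : signSet r = {1} := by
  simp [signSet, hr]

lemma signSet_of_neg {r : ℝ} (hr : r < 0) : signSet r = {-1} := by
  simp [signSet, hr, hr.not_gt]

lemma nlEnergy_add_const (c : ℝ) : nlEnergy m ν (fun x => u x + c) = nlEnergy m ν u := by
  simp only [nlEnergy, add_sub_add_right_eq_sub]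

lemma MeasurableKernel.measurable_lintegral (hprob : ∀ x, IsProbabilityMeasure (m x))
    (hker : MeasurableKernel m) {f : X → X → ℝ≥0∞} (hf : Measurable (Function.uncurry f)) :
    Measurable fun x => ∫⁻ y, f x y ∂(m x) := by
  let κ : ProbabilityTheory.Kernel X X := ⟨m, Measure.measurable_of_measurable_coe m hker⟩
  have : ProbabilityTheory.IsMarkovKernel κ := ⟨hprob⟩
  exact hf.lintegral_kernel_prod_right (κ := κ)

lemma subdiffFm.integral_eq_zero [IsFiniteMeasure ν] {v : X → ℝ} (h : subdiffFm m ν u v) :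
    ∫ x, v x ∂ν = 0 := by
  obtain ⟨hu2, -, ⟨hu, hE⟩, hineq⟩ := h
  have shift : ∀ t : ℝ, (∫ x, v x ∂ν) * t ≤ 0 := by
    intro t
    have := hineq (fun x => u x + t) (hu2.add (memLp_const t))
      ⟨hu.add_const t, by rwa [nlEnergy_add_const]⟩
    simp only [TVm, nlEnergy_add_const, add_sub_cancel_left, integral_mul_const] at this
    linarith
  linarith [shift 1, shift (-1)]

lemma subdiffFm.nlEnergy_eq_zero (h : subdiffFm m ν u fun _ => 0) : nlEnergy m ν u = 0 := by
  obtain ⟨-, -, ⟨-, hE⟩, hineq⟩ := h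
  have := hineq 0 MemLp.zero ⟨measurable_const, by simp [nlEnergy]⟩
  have hTV0 : TVm m ν 0 = 0 := by simp [TVm, nlEnergy]
  simp only [hTV0, zero_mul, integral_zero, add_zero, toReal_zero] at this
  have hTV : TVm m ν u = 0 := ((toReal_eq_zero_iff _).1 (this.antisymm toReal_nonneg)).resolve_right
    (mul_ne_top (by simp) hE.ne)
  simpa [TVm] using hTV

lemma measure_le_half_of_integral_eq_zero [IsProbabilityMeasure ν] {ξ : X → ℝ} {S : Set X}
    (hS : MeasurableSet S) (hξ : Integrable ξ ν) (h0 : ∫ x, ξ x ∂ν = 0)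
    (hge : ∀ᵐ x ∂ν, -1 ≤ ξ x) (hS1 : ∀ᵐ x ∂ν, x ∈ S → ξ x = 1) : ν S ≤ 1 / 2 := by
  have : 2 * ν.real S ≤ 1 := calc
    2 * ν.real S = ∫ x, S.indicator (fun _ => (2 : ℝ)) x ∂ν := by
      rw [integral_indicator_const _ hS]; simp [mul_comm]
    _ ≤ ∫ x, (ξ x + 1) ∂ν := by
      refine integral_mono_ae ((integrable_const 2).indicator hS) (hξ.add (integrable_const 1)) ?_
      filter_upwards [hge, hS1] with x h1 h2
      by_cases hx : x ∈ S
      · rw [indicator_of_mem hx, h2 hx]; norm_num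
      · rw [indicator_of_notMem hx]; linarith
    _ = 1 := by rw [integral_add hξ (integrable_const 1), h0]; simp
  calc ν S = ENNReal.ofReal (ν.real S) := (ofReal_measureReal).symm
    _ ≤ ENNReal.ofReal (1 / 2) := ofReal_le_ofReal (by linarith)
    _ = 1 / 2 := by
      rw [one_div, ENNReal.ofReal_inv_of_pos two_pos, ofReal_ofNat, one_div]

lemma ae_measure_setOf_ne_eq_zero_of_nlEnergy_eq_zero (hprob : ∀ x, IsProbabilityMeasure (m x))
    (hker : MeasurableKernel m) (hu : Measurable u) (hE : nlEnergy m ν u = 0) :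
    ∀ᵐ x ∂ν, m x {y | u y ≠ u x} = 0 := by
  have hf : Measurable (Function.uncurry fun x y => ENNReal.ofReal |u y - u x|) := by fun_prop
  filter_upwards [(lintegral_eq_zero_iff (hker.measurable_lintegral hprob hf)).1 hE] with x hx
  have hnull := ae_iff.1 ((lintegral_eq_zero_iff (by fun_prop)).1 hx)
  refine measure_mono_null (fun y hy => ?_) hnull
  simpa [sub_eq_zero] using hy

lemma MConnected.measure_eq_zero_or_compl (hconn : MConnected m ν)
    (hprob : ∀ x, IsProbabilityMeasure (m x)) (hker : MeasurableKernel m) (hu : Measurable u)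
    (hE : nlEnergy m ν u = 0) {S : Set X} (hS : MeasurableSet S)
    (hsep : ∀ x ∈ S, ∀ y ∉ S, u y ≠ u x) : ν S = 0 ∨ ν Sᶜ = 0 := by
  by_contra! h
  refine (hconn S Sᶜ hS hS.compl (pos_iff_ne_zero.2 h.1) (pos_iff_ne_zero.2 h.2)
    (union_compl_self S)).ne' ?_
  calc Lm m ν S Sᶜ = ∫⁻ _ in S, 0 ∂ν := by
        refine setLIntegral_congr_fun_ae hS ?_
        filter_upwards [ae_measure_setOf_ne_eq_zero_of_nlEnergy_eq_zero hprob hker hu hE]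
          with x hx hxS
        exact measure_mono_null (fun y hy => hsep x hxS y hy) hx
    _ = 0 := lintegral_zero

lemma MConnected.ae_eq_zero_of_nlEnergy_eq_zero [IsProbabilityMeasure ν] (hconn : MConnected m ν)
    (hprob : ∀ x, IsProbabilityMeasure (m x)) (hker : MeasurableKernel m) (hu : Measurable u)
    (hE : nlEnergy m ν u = 0) (hneg : ν {x | u x < 0} ≤ 1 / 2) (hpos : ν {x | 0 < u x} ≤ 1 / 2) :
    u =ᵐ[ν] 0 := by
  have null_of_le_half : ∀ S, MeasurableSet S → (∀ x ∈ S, ∀ y ∉ S, u y ≠ u x) →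
      ν S ≤ 1 / 2 → ν S = 0 := by
    intro S hS hsep hle
    refine (hconn.measure_eq_zero_or_compl hprob hker hu hE hS hsep).resolve_right fun hc => ?_
    rw [prob_compl_eq_zero_iff hS] at hc
    norm_num [hc] at hle
  have hneg0 := null_of_le_half _ (measurableSet_lt hu measurable_const)
    (fun x (hx : u x < 0) y (hy : ¬u y < 0) => (by linarith : u x < u y).ne') hneg
  have hpos0 := null_of_le_half _ (measurableSet_lt measurable_const hu)
    (fun x (hx : 0 < u x) y (hy : ¬0 < u y) => (by linarith : u y < u x).ne) hpos
  refine ae_iff.2 (measure_mono_null (fun x hx => ?_) (measure_union_null hneg0 hpos0))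
  exact lt_or_gt_of_ne hx

end

theorem eigenvalue_ne_zero_iff_median_general
    {X : Type*} [MeasurableSpace X]
    (m : X → Measure X) (hprob : ∀ x, IsProbabilityMeasure (m x))
    (hker : MeasurableKernel m)
    (ν : Measure X) [IsProbabilityMeasure ν]
    (hconn : MConnected m ν)
    (lam : ℝ) (u : X → ℝ) (heig : IsEigenpair m ν lam u) :
    lam ≠ 0 ↔ (ν {x | u x < 0} ≤ 1 / 2 ∧ ν {x | 0 < u x} ≤ 1 / 2) := by
  obtain ⟨hnorm, ξ, hξ, hξsign, hsub⟩ := heig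
  have hu : Measurable u := hsub.2.2.1.1
  have hξI : ∀ᵐ x ∂ν, ξ x ∈ Icc (-1) 1 := hξsign.mono fun x hx => signSet_subset_Icc _ hx
  constructor
  · intro hlam
    have hξ0 : ∫ x, ξ x ∂ν = 0 := by
      have := hsub.integral_eq_zero
      rw [integral_const_mul] at this
      exact (mul_eq_zero.1 this).resolve_left hlam
    refine ⟨?_, measure_le_half_of_integral_eq_zero (measurableSet_lt measurable_const hu)
      (hξ.integrable le_top) hξ0 (hξI.mono fun x hx => hx.1) ?_⟩
    · refine measure_le_half_of_integral_eq_zero (ξ := fun x => -ξ x)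
        (measurableSet_lt hu measurable_const) (hξ.integrable le_top).neg
        (by rw [integral_neg, hξ0, neg_zero]) (hξI.mono fun x hx => by linarith [hx.2]) ?_
      filter_upwards [hξsign] with x hx hneg
      rw [signSet_of_neg hneg, mem_singleton_iff] at hx
      rw [hx, neg_neg]
    · filter_upwards [hξsign] with x hx hpos
      rwa [← mem_singleton_iff, ← signSet_of_pos hpos]
  · rintro ⟨hneg, hpos⟩ rfl
    simp only [zero_mul] at hsub
    have hu0 := hconn.ae_eq_zero_of_nlEnergy_eq_zero hprob hker hu hsub.nlEnergy_eq_zero hneg hpos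
    rw [eLpNorm_congr_ae hu0, eLpNorm_zero] at hnorm
    exact zero_ne_one hnorm

/-- If `(λ, u)` is an `m`-eigenpair of the 1-Laplacian on an `m`-connected metric random
walk space with invariant and reversible probability measure `ν`, then `λ ≠ 0` if and
only if `0` is a median of `u` with respect to `ν`. -/
theorem eigenvalue_ne_zero_iff_median
    {X : Type*} [MetricSpace X] [PolishSpace X] [MeasurableSpace X] [BorelSpace X]
    (m : X → Measure X) (hprob : ∀ x, IsProbabilityMeasure (m x))
    (hker : MeasurableKernel m)
    (ν : Measure X) [IsProbabilityMeasure ν] (hrev : Reversible m ν)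
    (hconn : MConnected m ν)
    (lam : ℝ) (u : X → ℝ) (heig : IsEigenpair m ν lam u) :
    lam ≠ 0 ↔ (ν {x | u x < 0} ≤ 1 / 2 ∧ ν {x | 0 < u x} ≤ 1 / 2) :=
  eigenvalue_ne_zero_iff_median_general m hprob hker ν hconn lam u heig
end
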